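/- Let X be a nonnegative-integer-valued random variable, let G be a sub-σ-algebra, and suppose P(X ≥ k) ≤ (1−c)^k/2 for some c ∈ (0,1) and a fixed k. Then P( E[2^{−X} | G] ≤ 2^{−k} ) ≤ (1−c)^k. -/

import Mathlib

open MeasureTheory

/-- If `P(X ≥ k) ≤ (1-c)^k / 2`, then the conditional expectation `E[2^{-X} | G]`
is at most `2^{-k}` with probability at most `(1-c)^k`. -/
theorem stmt5 {Ω : Type*} (G : MeasurableSpace Ω) [m0 : MeasurableSpace Ω] (μ : Measure Ω) [IsProbabilityMeasure μ]
    (hG : G ≤ m0) (X : Ω → ℕ) (hX : Measurable X)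
    (c : ℝ) (hc : 0 < c) (hc' : c < 1) (k : ℕ)
    (htail : (μ {ω | k ≤ X ω}).toReal ≤ (1 - c) ^ k / 2) :
    (μ {ω | (μ[fun ω' => (2 : ℝ) ^ (-(X ω' : ℤ)) | G]) ω ≤ (2 : ℝ) ^ (-(k : ℤ))}).toReal
      ≤ (1 - c) ^ k := by
  letI : MeasurableSpace Ω := m0
  set f : Ω → ℝ := fun ω => (2 : ℝ) ^ (-(X ω : ℤ)) with hf_def
  set S : Set Ω := {ω | k ≤ X ω} with hS_def
  have hSG : MeasurableSet[m0] S := hX measurableSet_Ici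
  have hS : MeasurableSet[m0] S := hSG
  set g : Ω → ℝ := S.indicator 1 with hg_def
  set t : ℝ := (2 : ℝ) ^ (-(k : ℤ)) with ht_def
  have ht_pos : 0 < t := by positivity
  have hf_measG : Measurable[m0] f :=
    (measurable_from_top (f := fun n : ℕ => (2 : ℝ) ^ (-(n : ℤ)))).comp hX
  have hf_meas : Measurable[m0] f := hf_measG
  have hf_nonneg : ∀ ω, 0 ≤ f ω := fun ω => by positivity
  have hf_le_one : ∀ ω, f ω ≤ 1 := fun ω =>
    zpow_le_one_of_nonpos₀ one_le_two (by simp)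
  have hf_int : Integrable f μ := by
    refine (integrable_const (1 : ℝ)).mono'
      hf_meas.aestronglyMeasurable ?_
    filter_upwards with ω
    rw [Real.norm_eq_abs, abs_of_nonneg (hf_nonneg ω)]
    exact hf_le_one ω
  have hg_int : Integrable g μ := (integrable_const (1 : ℝ)).indicator hS
  -- pointwise key inequality : 2t ≤ f + 2t * g
  have hkey : ∀ ω, 2 * t ≤ f ω + (2 * t) * g ω := by
    intro ω
    by_cases hω : ω ∈ S
    · have : g ω = 1 := by simp [hg_def, hω]
      rw [this]
      nlinarith [hf_nonneg ω]
    · have hg0 : g ω = 0 := by simp [hg_def, hω]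
      have hXω : X ω ≤ k - 1 := by
        simp only [hS_def, Set.mem_setOf_eq, not_le] at hω
        omega
      have hk1 : (1:ℕ) ≤ k := by
        simp only [hS_def, Set.mem_setOf_eq, not_le] at hω
        omega
      have hle : (2 : ℝ) ^ (-(k : ℤ) + 1) ≤ f ω := by
        apply zpow_le_zpow_right₀ one_le_two
        omega
      have h2t : (2 : ℝ) ^ (-(k : ℤ) + 1) = 2 * t := by
        rw [zpow_add₀ (by norm_num : (2:ℝ) ≠ 0)]
        ring
      rw [hg0, mul_zero, add_zero]
      linarith [hle, h2t]
  haveI : SigmaFinite (μ.trim hG) := by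
    have : IsFiniteMeasure (μ.trim hG) := isFiniteMeasure_trim hG
    infer_instance
  -- conditional expectation inequality
  have hce : ∀ᵐ ω ∂μ, 2 * t ≤ (μ[f|G]) ω + (2 * t) * (μ[g|G]) ω := by
    have h1 : (fun _ : Ω => 2 * t) ≤ᵐ[μ] f + (2 * t) • g := by
      filter_upwards with ω
      simpa using hkey ω
    have h2 := condExp_mono (m := G) (integrable_const (2 * t))
      (hf_int.add (hg_int.smul (2 * t))) h1
    have h3 : μ[fun _ : Ω => 2 * t|G] = fun _ => 2 * t := condExp_const hG _
    have h4 : μ[f + (2 * t) • g|G] =ᵐ[μ] μ[f|G] + μ[(2 * t) • g|G] :=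
      condExp_add hf_int (hg_int.smul (2 * t)) G
    have h5 : μ[(2 * t) • g|G] =ᵐ[μ] (2 * t) • μ[g|G] := condExp_smul (2 * t) g G
    filter_upwards [h2, h4, h5] with ω h2 h4 h5
    rw [h3] at h2
    simp only [Pi.add_apply, Pi.smul_apply, smul_eq_mul] at h4 h5 ⊢
    rw [h4, h5] at h2
    exact h2
  set Z : Ω → ℝ := μ[g|G] with hZ_def
  have hZ_nonneg : 0 ≤ᵐ[μ] Z := condExp_nonneg (by
    filter_upwards with ω
    exact Set.indicator_nonneg (fun _ _ => zero_le_one) ω)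
  -- a.e. inclusion of sets
  have hsub : {ω | (μ[f|G]) ω ≤ t} ≤ᵐ[μ] {ω | (1:ℝ)/2 ≤ Z ω} := by
    filter_upwards [hce, hZ_nonneg] with ω h1 h2 h3
    have h3' : (μ[f|G]) ω ≤ t := h3
    show (1:ℝ)/2 ≤ Z ω
    nlinarith
  have hmeas_le : μ {ω | (μ[f|G]) ω ≤ t} ≤ μ {ω | (1:ℝ)/2 ≤ Z ω} :=
    measure_mono_ae hsub
  -- Markov
  have hZ_int : Integrable Z μ := integrable_condExp
  have hmarkov := mul_meas_ge_le_integral_of_nonneg hZ_nonneg hZ_int ((1:ℝ)/2)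
  have hintZ : ∫ ω, Z ω ∂μ = (μ S).toReal := by
    rw [hZ_def, integral_condExp hG, hg_def, integral_indicator_one hS]
    rfl
  rw [hintZ] at hmarkov
  have h1 : (μ {ω | (1:ℝ)/2 ≤ Z ω}).toReal ≤ (1 - c) ^ k := by
    have : 1 / 2 * (μ {ω | (1:ℝ)/2 ≤ Z ω}).toReal ≤ (1 - c) ^ k / 2 := le_trans hmarkov htail
    linarith
  calc (μ {ω | (μ[f|G]) ω ≤ t}).toReal
      ≤ (μ {ω | (1:ℝ)/2 ≤ Z ω}).toReal :=
        ENNReal.toReal_mono (measure_ne_top _ _) hmeas_le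
    _ ≤ (1 - c) ^ k := h1
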